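/- For arbitrary scalars p and q, the skew-symmetric bilinear map φ_4(p,q) on h_2 defined by φ_4(e_1,e_4) = (p+q)e_1, φ_4(e_2,e_3) = −e_1, φ_4(e_2,e_4) = q e_2, φ_4(e_3,e_4) = e_2 + p e_3, φ_4(e_4,e_5) = −(2p+q)e_5, and zero otherwise, is a 2-cocycle of h_2 with adjoint coefficients. -/

import Mathlib

/-!
The derived algebra of `h₂` is the line spanned by `e₅`, and `φ₄(e₅, z) = (2p+q) z₄ e₅`.
Hence every term of the cocycle identity is a multiple of `e₅`, and the identity collapses to
one scalar polynomial identity in the coordinates of `x, y, z`: the coefficient `2p+q` of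
`φ₄(e₄, e₅)` is exactly what balances the terms `[x, φ₄(y, z)]`.
-/

noncomputable section

/-- The underlying space of the 5-dimensional Heisenberg Lie algebra `h₂`. -/
abbrev V : Type := Fin 5 → ℝ

/-- Basis vectors: `e 0, …, e 4` are `e₁, …, e₅`. -/
def e (i : Fin 5) : V := Pi.single i 1

/-- The Heisenberg bracket on `h₂`: `[e₁,e₃] = e₅`, `[e₂,e₄] = e₅`. -/
def br (x y : V) : V :=
  (x 0 * y 2 - x 2 * y 0 + x 1 * y 3 - x 3 * y 1) • e 4

/-- The deformed bracket `[x,y]_t = [x,y] + t • φ x y`. -/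
def brt (t : ℝ) (φ : V → V → V) (x y : V) : V := br x y + t • φ x y

/-- The Chevalley–Eilenberg 2-cocycle condition (adjoint coefficients) for a
skew-symmetric 2-cochain `φ` on `h₂`. -/
def IsCocycle (φ : V → V → V) : Prop :=
  ∀ x y z : V,
    φ (br x y) z - φ (br x z) y + φ (br y z) x
      - br x (φ y z) + br y (φ x z) - br z (φ x y) = 0

/-- `φ₄(p,q)`: `(e₁,e₄) ↦ (p+q)e₁`, `(e₂,e₃) ↦ −e₁`, `(e₂,e₄) ↦ q e₂`, `(e₃,e₄) ↦ e₂ + p e₃`, `(e₄,e₅) ↦ −(2p+q)e₅`, zero otherwise. -/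
def phi4 (p q : ℝ) (x y : V) : V :=
  (x 0 * y 3 - x 3 * y 0) • ((p + q) • e 0)
  + (x 1 * y 2 - x 2 * y 1) • (-e 0)
  + (x 1 * y 3 - x 3 * y 1) • (q • e 1)
  + (x 2 * y 3 - x 3 * y 2) • (e 1 + p • e 2)
  + (x 3 * y 4 - x 4 * y 3) • ((-(2*p + q)) • e 4)

def brCoeff (x y : V) : ℝ := x 0 * y 2 - x 2 * y 0 + x 1 * y 3 - x 3 * y 1

theorem br_eq_brCoeff_smul (x y : V) : br x y = brCoeff x y • e 4 := rfl

theorem phi4_smul_e_four_left (p q c : ℝ) (z : V) :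
    phi4 p q (c • e 4) z = (c * ((2 * p + q) * z 3)) • e 4 := by
  ext i
  fin_cases i <;>
    simp only [phi4, e, Pi.add_apply, Pi.smul_apply, Pi.neg_apply, Pi.single_apply, smul_eq_mul,
      Fin.reduceEq, Fin.isValue, ↓reduceIte, Fin.reduceFinMk] <;> ring

theorem brCoeff_phi4 (p q : ℝ) (x y z : V) :
    brCoeff x (phi4 p q y z) =
      p * x 0 * (y 2 * z 3 - y 3 * z 2)
        - x 2 * ((p + q) * (y 0 * z 3 - y 3 * z 0) - (y 1 * z 2 - y 2 * z 1))
        - x 3 * (q * (y 1 * z 3 - y 3 * z 1) + (y 2 * z 3 - y 3 * z 2)) := by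
  simp only [brCoeff, phi4, e, Pi.add_apply, Pi.smul_apply, Pi.neg_apply, Pi.single_apply,
    smul_eq_mul, Fin.reduceEq, Fin.isValue, ↓reduceIte]
  ring

/-- For arbitrary scalars `p, q`, the cochain `φ₄(p,q)` is a 2-cocycle of `h₂`
with adjoint coefficients. -/
theorem phi4_isCocycle (p q : ℝ) : IsCocycle (phi4 p q) := by
  intro x y z
  simp only [br_eq_brCoeff_smul, phi4_smul_e_four_left, ← sub_smul, ← add_smul, brCoeff_phi4]
  apply smul_eq_zero_of_left
  simp only [brCoeff]
  ring

end
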